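/- arXiv:1403.4907 — 2 statements merged into one kernel-verified Lean document; each statement's English description precedes it below -/
import Mathlib

section
/- In a non-commutative probability space (A,φ), for each n ≥ 1 and χ : {1,…,n} → {ℓ,r} there exists a unique family of multilinear functionals κ_χ : Aⁿ → ℂ (the (ℓ,r)-cumulants) such that φ(z_1⋯z_n) = Σ_{π ∈ BNC(χ)} Π_{V ∈ π} κ_{χ|_V}((z_1,…,z_n)|_V) for all z_1,…,z_n ∈ A. -/
open scoped BigOperators

def permAct {n : ℕ} (s : Equiv.Perm (Fin n)) (π : Setoid (Fin n)) : Setoid (Fin n) :=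
  Setoid.comap (fun x => s⁻¹ x) π

def IsNonCrossing {n : ℕ} (π : Setoid (Fin n)) : Prop :=
  ∀ a b c d : Fin n, a < b → b < c → c < d → π.r a c → π.r b d → π.r a b

def leftF {n : ℕ} (χ : Fin n → Bool) : Finset (Fin n) :=
  Finset.univ.filter fun i => χ i = true

def rightF {n : ℕ} (χ : Fin n → Bool) : Finset (Fin n) :=
  Finset.univ.filter fun i => χ i = false

theorem card_leftF_add_rightF {n : ℕ} (χ : Fin n → Bool) :
    (leftF χ).card + (rightF χ).card = n := by
  classical
  have h := Finset.card_filter_add_card_filter_not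
    (s := (Finset.univ : Finset (Fin n))) (p := fun i => χ i = true)
  simpa [leftF, rightF, Bool.not_eq_true] using h

noncomputable def eqLeft {n : ℕ} (χ : Fin n → Bool) :
    Fin (leftF χ).card ≃ {x : Fin n // χ x = true} :=
  ((leftF χ).orderIsoOfFin rfl).toEquiv.trans
    (Equiv.subtypeEquivRight (fun x => by simp [leftF]))

noncomputable def eqRight {n : ℕ} (χ : Fin n → Bool) :
    Fin (rightF χ).card ≃ {x : Fin n // ¬ χ x = true} :=
  (Fin.revPerm.trans ((rightF χ).orderIsoOfFin rfl).toEquiv).trans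
    (Equiv.subtypeEquivRight (fun x => by simp [rightF]))

noncomputable def sPerm {n : ℕ} (χ : Fin n → Bool) : Equiv.Perm (Fin n) :=
  (((finCongr (card_leftF_add_rightF χ).symm).trans finSumFinEquiv.symm).trans
    ((eqLeft χ).sumCongr (eqRight χ))).trans (Equiv.sumCompl fun i => χ i = true)

def BNC {n : ℕ} (χ : Fin n → Bool) : Set (Setoid (Fin n)) :=
  {π | ∃ σ, IsNonCrossing σ ∧ π = permAct (sPerm χ) σ}

noncomputable def blockFinset {n : ℕ} (V : Set (Fin n)) : Finset (Fin n) :=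
  V.toFinite.toFinset

noncomputable def blockCard {n : ℕ} (V : Set (Fin n)) : ℕ := (blockFinset V).card

noncomputable def enum {n : ℕ} (V : Set (Fin n)) : Fin (blockCard V) → Fin n :=
  fun i => (blockFinset V).orderEmbOfFin rfl i


/-!
The partition `⊤` (a single block) lies in every `BNC χ`, and every other bi-non-crossing
partition has only blocks of size `< n`. Hence the moment-cumulant formula reads
`φ(z₁⋯zₙ) = κ_χ(z) + (terms involving only cumulants of order < n)`, which determines `κ_χ`
recursively (uniqueness) and can be taken as its definition (existence). Multilinearity is
inherited along the recursion, because each product over the blocks of a partition is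
multilinear: every variable occurs in exactly one block.
-/

instance {α : Type*} [Finite α] : Finite (Setoid α) :=
  Finite.of_injective (fun s : Setoid α => (s : α → α → Prop))
    fun _ _ h => Setoid.ext fun x y => iff_of_eq (congrFun₂ h x y)

section Blocks

variable {n : ℕ}

noncomputable def classesFinset (π : Setoid (Fin n)) : Finset (Set (Fin n)) :=
  (Set.toFinite π.classes).toFinset

noncomputable def properBNC (χ : Fin n → Bool) : Finset (Setoid (Fin n)) :=
  (Set.toFinite (BNC χ \ {⊤})).toFinset

@[simp]
lemma mem_classesFinset {π : Setoid (Fin n)} {V : Set (Fin n)} :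
    V ∈ classesFinset π ↔ V ∈ π.classes :=
  Set.Finite.mem_toFinset _

@[simp]
lemma mem_properBNC {χ : Fin n → Bool} {π : Setoid (Fin n)} :
    π ∈ properBNC χ ↔ π ∈ BNC χ ∧ π ≠ ⊤ := by
  simp [properBNC]

@[simp]
lemma mem_blockFinset {V : Set (Fin n)} {i : Fin n} : i ∈ blockFinset V ↔ i ∈ V :=
  Set.Finite.mem_toFinset _

lemma enum_injective (V : Set (Fin n)) : Function.Injective (enum V) :=
  ((blockFinset V).orderEmbOfFin rfl).injective

lemma range_enum (V : Set (Fin n)) : Set.range (enum V) = V :=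
  (Finset.range_orderEmbOfFin _ _).trans (Set.Finite.coe_toFinset _)

lemma blockCard_pos {π : Setoid (Fin n)} {V : Set (Fin n)} (hV : V ∈ π.classes) :
    0 < blockCard V := by
  obtain ⟨a, ha⟩ := Setoid.nonempty_of_mem_partition π.isPartition_classes hV
  exact Finset.card_pos.mpr ⟨a, mem_blockFinset.mpr ha⟩

lemma blockCard_lt {π : Setoid (Fin n)} (hπ : π ≠ ⊤) {V : Set (Fin n)} (hV : V ∈ π.classes) :
    blockCard V < n := by
  refine (card_finset_fin_le _).lt_of_ne fun hcard => hπ ?_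
  have hfull : ∀ x, x ∈ V := fun x => mem_blockFinset.mp <|
    Finset.eq_univ_of_card _ (hcard.trans (Fintype.card_fin n).symm) ▸ Finset.mem_univ x
  obtain ⟨a, rfl⟩ := hV
  exact Setoid.eq_top_iff.mpr fun x y => π.trans' (hfull x) (π.symm' (hfull y))

lemma top_mem_BNC (χ : Fin n → Bool) : (⊤ : Setoid (Fin n)) ∈ BNC χ :=
  ⟨⊤, fun _ _ _ _ _ _ _ _ _ => trivial, rfl⟩

lemma classes_top (hn : 0 < n) : (⊤ : Setoid (Fin n)).classes = {Set.univ} := by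
  ext V
  constructor
  · rintro ⟨y, rfl⟩
    exact Set.eq_univ_of_forall fun _ => trivial
  · rintro rfl
    exact ⟨⟨0, hn⟩, by ext; simp⟩

lemma blockCard_univ : blockCard (Set.univ : Set (Fin n)) = n := by
  simp [blockCard, blockFinset]

lemma enum_univ (i : Fin (blockCard (Set.univ : Set (Fin n)))) :
    enum Set.univ i = Fin.cast blockCard_univ i :=
  (congrFun (Finset.orderEmbOfFin_unique rfl (fun x => mem_blockFinset.mpr (Set.mem_univ x))
    fun _ _ h => h) i).symm

lemma apply_restrict_univ {M X : Type*} (F : ∀ k, (Fin k → Bool) → (Fin k → M) → X)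
    (χ : Fin n → Bool) (z : Fin n → M) :
    F (blockCard Set.univ) (fun i => χ (enum Set.univ i)) (fun i => z (enum Set.univ i)) =
      F n χ z := by
  have key : ∀ k (h : k = n) (e : Fin k → Fin n), (∀ i, e i = Fin.cast h i) →
      F k (fun i => χ (e i)) (fun i => z (e i)) = F n χ z := by
    rintro k rfl e he
    obtain rfl : e = id := funext he
    rfl
  exact key _ blockCard_univ _ enum_univ

/-- Only the block containing `i` sees an update of the `i`-th variable. -/
lemma exists_prod_classes_update_eq {R M : Type*} [CommMonoid R] [DecidableEq (Fin n)]
    (π : Setoid (Fin n)) (g : ∀ V : Set (Fin n), (Fin (blockCard V) → M) → R)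
    (z : Fin n → M) (i : Fin n) :
    ∃ (V : Set (Fin n)) (j : Fin (blockCard V)) (c : R), ∀ t,
      ∏ W ∈ classesFinset π, g W (Function.update z i t ∘ enum W) =
        g V (Function.update (z ∘ enum V) j t) * c := by
  set V₀ := {x | π x i}
  have hV₀ : V₀ ∈ π.classes := π.mem_classes i
  obtain ⟨j, hj⟩ : i ∈ Set.range (enum V₀) := (range_enum V₀).symm ▸ π.refl' i
  refine ⟨V₀, j, ∏ W ∈ (classesFinset π).erase V₀, g W (z ∘ enum W), fun t => ?_⟩
  rw [← Finset.mul_prod_erase _ _ (mem_classesFinset.mpr hV₀), ← hj,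
    Function.update_comp_eq_of_injective _ (enum_injective V₀)]
  refine congrArg _ (Finset.prod_congr rfl fun W hW => ?_)
  obtain ⟨hne, hW⟩ := Finset.mem_erase.mp hW
  refine congrArg _ (Function.update_comp_eq_of_notMem_range _ _ ?_)
  rw [range_enum]
  exact fun hi => hne (Setoid.eq_of_mem_classes (mem_classesFinset.mp hW) hi hV₀ (hj ▸ π.refl' _))

end Blocks

section BlockProd

variable {R M : Type*} [CommSemiring R] [AddCommMonoid M] [Module R M] {n : ℕ}

noncomputable def blockProd (π : Setoid (Fin n))
    (f : ∀ V : Set (Fin n), MultilinearMap R (fun _ : Fin (blockCard V) => M) R) :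
    MultilinearMap R (fun _ : Fin n => M) R where
  toFun z := ∏ V ∈ classesFinset π, f V (z ∘ enum V)
  map_update_add' z i x y := by
    obtain ⟨V, j, c, h⟩ := exists_prod_classes_update_eq π (fun V => f V) z i
    simp only [h, MultilinearMap.map_update_add, add_mul]
  map_update_smul' z i a x := by
    obtain ⟨V, j, c, h⟩ := exists_prod_classes_update_eq π (fun V => f V) z i
    simp only [h, MultilinearMap.map_update_smul, smul_eq_mul, mul_assoc]

end BlockProd

section Moment

variable {R M : Type*} {n : ℕ}

noncomputable def bncMoment [CommSemiring R]
    (F : ∀ k, (Fin k → Bool) → (Fin k → M) → R) (χ : Fin n → Bool) (z : Fin n → M) : R :=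
  ∑ᶠ π ∈ BNC χ, ∏ᶠ V ∈ π.classes, F (blockCard V) (fun i => χ (enum V i)) (fun i => z (enum V i))

lemma bncMoment_eq_add_sum [CommSemiring R] (F : ∀ k, (Fin k → Bool) → (Fin k → M) → R)
    (hn : 0 < n) (χ : Fin n → Bool) (z : Fin n → M) :
    bncMoment F χ z = F n χ z + ∑ π ∈ properBNC χ, ∏ V ∈ classesFinset π,
      F (blockCard V) (fun i => χ (enum V i)) (fun i => z (enum V i)) := by
  rw [bncMoment, ← Set.insert_eq_of_mem (top_mem_BNC χ), ← Set.insert_sdiff_singleton,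
    finsum_mem_insert _ (fun h => h.2 rfl) (Set.toFinite _), classes_top hn,
    finprod_mem_singleton, apply_restrict_univ F,
    finsum_mem_eq_finite_toFinset_sum _ (Set.toFinite _)]
  exact congrArg _ (Finset.sum_congr rfl fun π _ => finprod_mem_eq_finite_toFinset_prod _ _)

lemma eq_of_bncMoment_eq [CommRing R] {F G : ∀ k, (Fin k → Bool) → (Fin k → M) → R}
    (h : ∀ m, 0 < m → ∀ (χ : Fin m → Bool) z, bncMoment F χ z = bncMoment G χ z) :
    ∀ m, 0 < m → ∀ (χ : Fin m → Bool) z, F m χ z = G m χ z := by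
  intro m
  induction m using Nat.strong_induction_on with
  | _ m ih =>
    intro hm χ z
    have hlower : ∑ π ∈ properBNC χ, ∏ V ∈ classesFinset π,
          F (blockCard V) (fun i => χ (enum V i)) (fun i => z (enum V i)) =
        ∑ π ∈ properBNC χ, ∏ V ∈ classesFinset π,
          G (blockCard V) (fun i => χ (enum V i)) (fun i => z (enum V i)) := by
      refine Finset.sum_congr rfl fun π hπ => Finset.prod_congr rfl fun V hV => ?_
      rw [mem_classesFinset] at hV
      exact ih _ (blockCard_lt (mem_properBNC.mp hπ).2 hV) (blockCard_pos hV) _ _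
    have hmoment := h m hm χ z
    rw [bncMoment_eq_add_sum F hm, bncMoment_eq_add_sum G hm, hlower] at hmoment
    exact add_right_cancel hmoment

end Moment

section Cumulant

variable {R A : Type*} [CommRing R] [Ring A] [Algebra R A] {n : ℕ}

/-- The guard `blockCard V < n` holds on every block of a proper partition (`blockCard_lt`);
it only makes the recursion visibly well-founded. -/
noncomputable def cumulant (φ : A →ₗ[R] R) :
    ∀ n, (Fin n → Bool) → MultilinearMap R (fun _ : Fin n => A) R
  | n, χ => φ.compMultilinearMap (MultilinearMap.mkPiAlgebraFin R n A) -
      ∑ π ∈ properBNC χ, blockProd π fun V =>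
        if _ : blockCard V < n then cumulant φ (blockCard V) (fun i => χ (enum V i)) else 0

lemma cumulant_apply (φ : A →ₗ[R] R) (χ : Fin n → Bool) (z : Fin n → A) :
    cumulant φ n χ z = φ (List.ofFn z).prod - ∑ π ∈ properBNC χ, ∏ V ∈ classesFinset π,
      cumulant φ (blockCard V) (fun i => χ (enum V i)) (fun i => z (enum V i)) := by
  rw [cumulant, sub_apply, sum_apply, LinearMap.compMultilinearMap_apply,
    MultilinearMap.mkPiAlgebraFin_apply]
  refine congrArg _ (Finset.sum_congr rfl fun π hπ => Finset.prod_congr rfl fun V hV => ?_)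
  dsimp only
  rw [dif_pos (blockCard_lt (mem_properBNC.mp hπ).2 (mem_classesFinset.mp hV))]
  rfl

lemma bncMoment_cumulant (φ : A →ₗ[R] R) (hn : 0 < n) (χ : Fin n → Bool) (z : Fin n → A) :
    bncMoment (fun k χ w => cumulant φ k χ w) χ z = φ (List.ofFn z).prod := by
  rw [bncMoment_eq_add_sum _ hn, cumulant_apply]
  exact sub_add_cancel _ _

end Cumulant

theorem exists_unique_lr_cumulants_general (A : Type*) [Ring A] [Algebra ℂ A]
    (φ : A →ₗ[ℂ] ℂ) :
    ∃ K : ∀ m : ℕ, (Fin m → Bool) → MultilinearMap ℂ (fun _ : Fin m => A) ℂ,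
      (∀ m : ℕ, 1 ≤ m → ∀ (χ : Fin m → Bool) (z : Fin m → A),
        φ (List.ofFn z).prod = ∑ᶠ π ∈ BNC χ, ∏ᶠ V ∈ Setoid.classes π,
          K (blockCard V) (fun i => χ (enum V i)) (fun i => z (enum V i))) ∧
      ∀ K' : ∀ m : ℕ, (Fin m → Bool) → MultilinearMap ℂ (fun _ : Fin m => A) ℂ,
        (∀ m : ℕ, 1 ≤ m → ∀ (χ : Fin m → Bool) (z : Fin m → A),
          φ (List.ofFn z).prod = ∑ᶠ π ∈ BNC χ, ∏ᶠ V ∈ Setoid.classes π,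
            K' (blockCard V) (fun i => χ (enum V i)) (fun i => z (enum V i))) →
        ∀ m : ℕ, 1 ≤ m → ∀ χ : Fin m → Bool, K' m χ = K m χ := by
  refine ⟨cumulant φ, fun m hm χ z => (bncMoment_cumulant φ hm χ z).symm,
    fun K' hK' m hm χ => MultilinearMap.ext fun z => ?_⟩
  refine eq_of_bncMoment_eq (F := fun k χ w => K' k χ w) (G := fun k χ w => cumulant φ k χ w)
    (fun k hk χ w => ?_) m hm χ z
  exact (hK' k hk χ w).symm.trans (bncMoment_cumulant φ hk χ w).symm

/-- Existence and uniqueness of the `(ℓ,r)`-cumulant functionals: in a non-commutative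
probability space `(A,φ)` there is a family of multilinear functionals
`κ_χ : Aⁿ → ℂ` (for `n ≥ 1` and `χ : {1,…,n} → {ℓ,r}`) satisfying the moment-cumulant
formula `φ(z_1⋯z_n) = Σ_{π ∈ BNC(χ)} Π_{V ∈ π} κ_{χ|_V}((z_1,…,z_n)|_V)`, and any two
such families agree (for `n ≥ 1`). -/
theorem exists_unique_lr_cumulants (A : Type*) [Ring A] [Algebra ℂ A]
    (φ : A →ₗ[ℂ] ℂ) (hφ : φ 1 = 1) :
    ∃ K : ∀ m : ℕ, (Fin m → Bool) → MultilinearMap ℂ (fun _ : Fin m => A) ℂ,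
      (∀ m : ℕ, 1 ≤ m → ∀ (χ : Fin m → Bool) (z : Fin m → A),
        φ (List.ofFn z).prod = ∑ᶠ π ∈ BNC χ, ∏ᶠ V ∈ Setoid.classes π,
          K (blockCard V) (fun i => χ (enum V i)) (fun i => z (enum V i))) ∧
      ∀ K' : ∀ m : ℕ, (Fin m → Bool) → MultilinearMap ℂ (fun _ : Fin m => A) ℂ,
        (∀ m : ℕ, 1 ≤ m → ∀ (χ : Fin m → Bool) (z : Fin m → A),
          φ (List.ofFn z).prod = ∑ᶠ π ∈ BNC χ, ∏ᶠ V ∈ Setoid.classes π,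
            K' (blockCard V) (fun i => χ (enum V i)) (fun i => z (enum V i))) →
        ∀ m : ℕ, 1 ≤ m → ∀ χ : Fin m → Bool, K' m χ = K m χ :=
  exists_unique_lr_cumulants_general A φ
end

section
/- If a two-faced family z' and a two-faced family z'' in (A,φ) are combinatorially-bi-free (all mixed (ℓ,r)-cumulants vanish), then the cumulants of z' + z'' are additive: κ_α(z'+z'') = κ_α(z') + κ_α(z'') for every α : {1,…,n} → I ⊔ J. -/
open scoped BigOperators

theorem MultilinearMap.map_add_of_map_piecewise_eq_zero {R ι N : Type*} {M : ι → Type*}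
    [CommSemiring R] [Fintype ι] [DecidableEq ι] [Nonempty ι]
    [∀ i, AddCommMonoid (M i)] [∀ i, Module R (M i)] [AddCommMonoid N] [Module R N]
    (f : MultilinearMap R M N) (x y : ∀ i, M i)
    (h : ∀ s : Finset ι, s ≠ ∅ → s ≠ Finset.univ → f (s.piecewise x y) = 0) :
    f (x + y) = f x + f y := by
  rw [f.map_add_univ, Finset.sum_eq_add Finset.univ ∅ Finset.univ_nonempty.ne_empty
      (fun s _ hs => h s hs.2 hs.1) (by simp) (by simp),
    Finset.piecewise_univ, Finset.piecewise_empty]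

theorem combinatorially_bifree_cumulants_additive_general (A : Type*) [Ring A] [Algebra ℂ A]
    (K : ∀ m : ℕ, (Fin m → Bool) → MultilinearMap ℂ (fun _ : Fin m => A) ℂ)
    (I J : Type*) (z' z'' : I ⊕ J → A)
    (hbifree : ∀ (m : ℕ) (α : Fin m → I ⊕ J) (ε : Fin m → Bool), (∃ k l, ε k ≠ ε l) →
      K m (fun k => (α k).isLeft)
        (fun k => if ε k then z' (α k) else z'' (α k)) = 0) :
    ∀ (m : ℕ), 1 ≤ m → ∀ (α : Fin m → I ⊕ J),
      K m (fun k => (α k).isLeft) (fun k => z' (α k) + z'' (α k)) =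
        K m (fun k => (α k).isLeft) (fun k => z' (α k)) +
        K m (fun k => (α k).isLeft) (fun k => z'' (α k)) := by
  intro m hm α
  have : Nonempty (Fin m) := ⟨⟨0, hm⟩⟩
  refine (K m _).map_add_of_map_piecewise_eq_zero _ _ fun s hs_ne_empty hs_ne_univ => ?_
  obtain ⟨k, hk⟩ := Finset.nonempty_iff_ne_empty.2 hs_ne_empty
  obtain ⟨l, hl⟩ : ∃ l, l ∉ s := by simpa [Finset.eq_univ_iff_forall] using hs_ne_univ
  have hmixed := hbifree m α (fun j => decide (j ∈ s)) ⟨k, l, by simp [hk, hl]⟩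
  simp only [decide_eq_true_eq] at hmixed
  exact hmixed

/-- If two two-faced families `z'` and `z''` in `(A,φ)` are combinatorially-bi-free (all
mixed `(ℓ,r)`-cumulants vanish), then cumulants are additive:
`κ_α(z'+z'') = κ_α(z') + κ_α(z'')` for every `α : {1,…,n} → I ⊔ J` (`n ≥ 1`).
Here `K` is the family of `(ℓ,r)`-cumulant functionals of `(A,φ)`, characterized by the
moment-cumulant formula. -/
theorem combinatorially_bifree_cumulants_additive (A : Type*) [Ring A] [Algebra ℂ A]
    (φ : A →ₗ[ℂ] ℂ) (hφ : φ 1 = 1)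
    (K : ∀ m : ℕ, (Fin m → Bool) → MultilinearMap ℂ (fun _ : Fin m => A) ℂ)
    (hK : ∀ m : ℕ, 1 ≤ m → ∀ (χ : Fin m → Bool) (z : Fin m → A),
      φ (List.ofFn z).prod = ∑ᶠ π ∈ BNC χ, ∏ᶠ V ∈ Setoid.classes π,
        K (blockCard V) (fun i => χ (enum V i)) (fun i => z (enum V i)))
    (I J : Type*) (z' z'' : I ⊕ J → A)
    (hbifree : ∀ (m : ℕ) (α : Fin m → I ⊕ J) (ε : Fin m → Bool), (∃ k l, ε k ≠ ε l) →
      K m (fun k => (α k).isLeft)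
        (fun k => if ε k then z' (α k) else z'' (α k)) = 0) :
    ∀ (m : ℕ), 1 ≤ m → ∀ (α : Fin m → I ⊕ J),
      K m (fun k => (α k).isLeft) (fun k => z' (α k) + z'' (α k)) =
        K m (fun k => (α k).isLeft) (fun k => z' (α k)) +
        K m (fun k => (α k).isLeft) (fun k => z'' (α k)) :=
  combinatorially_bifree_cumulants_additive_general A K I J z' z'' hbifree
end
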